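/- arXiv:2105.03497 — 2 statements merged into one kernel-verified Lean document; each statement's English description precedes it below -/
import Mathlib

section
/- Fix parameters λ_norm > 0, α ≥ 0, Δt > 0, a critical velocity V_crit > 0 with f(v) = max(V_crit, v)/V_crit, a finite index set 𝒯 of times, and a total duration T_len. For a velocity time series w = (w_t)_{t∈𝒯} define the failure rate Λ(w) = λ_norm·T_len·(1−α) + λ_norm·α·Δt·∑_{t∈𝒯} f(w_t)². Then for any ensemble of H ≥ 1 velocity time series v⁽¹⁾, …, v⁽ᴴ⁾ with nonnegative entries, the ensemble-averaged failure rate dominates the failure rate of the ensemble-averaged velocities: (1/H)·∑_{i=1}^H Λ(v⁽ⁱ⁾) ≥ Λ(v̄), where v̄_t = (1/H)·∑_{i=1}^H v⁽ⁱ⁾_t for each t ∈ 𝒯. -/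
open Finset

/-- Proposition 1: the ensemble-averaged failure rate (FR-2) dominates
the failure rate of the ensemble-averaged wind velocities (FR-1), for the quadratic
NHPP failure rate `Λ(w) = λ_norm·T_len·(1−α) + λ_norm·α·Δt·∑_{t∈𝒯} f(w_t)²` with
`f(v) = max(V_crit, v)/V_crit`. -/
theorem FR2_ge_FR1 {τ : Type*} (𝒯 : Finset τ)
    (lamNorm alpha dt Tlen Vcrit : ℝ)
    (hlam : 0 < lamNorm) (halpha : 0 ≤ alpha) (hdt : 0 < dt) (hVcrit : 0 < Vcrit)
    (H : ℕ) (hH : 1 ≤ H) (v : Fin H → τ → ℝ) (hv : ∀ i t, 0 ≤ v i t) :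
    (1 / (H : ℝ)) * ∑ i, (lamNorm * Tlen * (1 - alpha) +
        lamNorm * alpha * dt * ∑ t ∈ 𝒯, (max Vcrit (v i t) / Vcrit) ^ 2) ≥
      lamNorm * Tlen * (1 - alpha) +
        lamNorm * alpha * dt *
          ∑ t ∈ 𝒯, (max Vcrit ((1 / (H : ℝ)) * ∑ i, v i t) / Vcrit) ^ 2 := by
  have hHpos : (0 : ℝ) < H := by exact_mod_cast hH
  -- pointwise inequality for each t
  have key : ∀ t ∈ 𝒯, (max Vcrit ((1 / (H : ℝ)) * ∑ i, v i t) / Vcrit) ^ 2 ≤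
      (1 / (H : ℝ)) * ∑ i, (max Vcrit (v i t) / Vcrit) ^ 2 := by
    intro t _
    set g : Fin H → ℝ := fun i => max Vcrit (v i t) with hg
    have hstep1 : max Vcrit ((1 / (H : ℝ)) * ∑ i, v i t) ≤ (1 / (H : ℝ)) * ∑ i, g i := by
      apply max_le
      · have : (Vcrit * H) ≤ ∑ i : Fin H, g i := by
          calc Vcrit * H = ∑ _i : Fin H, Vcrit := by
                simp [mul_comm]
            _ ≤ ∑ i, g i := Finset.sum_le_sum fun i _ => le_max_left _ _
        calc Vcrit = (1 / (H : ℝ)) * (Vcrit * H) := by field_simp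
          _ ≤ _ := by
            apply mul_le_mul_of_nonneg_left this (by positivity)
      · apply mul_le_mul_of_nonneg_left _ (by positivity)
        exact Finset.sum_le_sum fun i _ => le_max_right _ _
    have hnn : 0 ≤ max Vcrit ((1 / (H : ℝ)) * ∑ i, v i t) := le_trans hVcrit.le (le_max_left _ _)
    have hsq : (max Vcrit ((1 / (H : ℝ)) * ∑ i, v i t)) ^ 2 ≤ ((1 / (H : ℝ)) * ∑ i, g i) ^ 2 :=
      pow_le_pow_left₀ hnn hstep1 2
    have hcs : (∑ i : Fin H, g i) ^ 2 ≤ (H : ℝ) * ∑ i, g i ^ 2 := by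
      have := sq_sum_le_card_mul_sum_sq (s := (Finset.univ : Finset (Fin H))) (f := g)
      simpa using this
    have h2 : ((1 / (H : ℝ)) * ∑ i, g i) ^ 2 ≤ (1 / (H : ℝ)) * ∑ i, g i ^ 2 := by
      rw [mul_pow]
      have : (1 / (H : ℝ)) ^ 2 * (∑ i : Fin H, g i) ^ 2 ≤
          (1 / (H : ℝ)) ^ 2 * ((H : ℝ) * ∑ i, g i ^ 2) :=
        mul_le_mul_of_nonneg_left hcs (by positivity)
      calc (1 / (H : ℝ)) ^ 2 * (∑ i : Fin H, g i) ^ 2 ≤ _ := this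
        _ = (1 / (H : ℝ)) * ∑ i, g i ^ 2 := by field_simp
    have : (max Vcrit ((1 / (H : ℝ)) * ∑ i, v i t)) ^ 2 ≤ (1 / (H : ℝ)) * ∑ i, g i ^ 2 :=
      le_trans hsq h2
    calc (max Vcrit ((1 / (H : ℝ)) * ∑ i, v i t) / Vcrit) ^ 2
        = (max Vcrit ((1 / (H : ℝ)) * ∑ i, v i t)) ^ 2 / Vcrit ^ 2 := by rw [div_pow]
      _ ≤ ((1 / (H : ℝ)) * ∑ i, g i ^ 2) / Vcrit ^ 2 :=
          div_le_div_of_nonneg_right this (by positivity) |>.trans_eq rfl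
      _ = (1 / (H : ℝ)) * ∑ i, (g i / Vcrit) ^ 2 := by
          simp only [div_pow, Finset.mul_sum, Finset.sum_div, mul_div_assoc]
  -- assemble
  have hcoef : 0 ≤ lamNorm * alpha * dt := by positivity
  have hsum : ∑ t ∈ 𝒯, (max Vcrit ((1 / (H : ℝ)) * ∑ i, v i t) / Vcrit) ^ 2 ≤
      (1 / (H : ℝ)) * ∑ i, ∑ t ∈ 𝒯, (max Vcrit (v i t) / Vcrit) ^ 2 := by
    rw [Finset.mul_sum]
    calc _ ≤ ∑ t ∈ 𝒯, (1 / (H : ℝ)) * ∑ i, (max Vcrit (v i t) / Vcrit) ^ 2 :=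
          Finset.sum_le_sum key
      _ = _ := by simp only [Finset.mul_sum]; exact Finset.sum_comm
  have hexp : (1 / (H : ℝ)) * ∑ i, (lamNorm * Tlen * (1 - alpha) +
      lamNorm * alpha * dt * ∑ t ∈ 𝒯, (max Vcrit (v i t) / Vcrit) ^ 2)
      = lamNorm * Tlen * (1 - alpha) +
        lamNorm * alpha * dt * ((1 / (H : ℝ)) * ∑ i, ∑ t ∈ 𝒯, (max Vcrit (v i t) / Vcrit) ^ 2) := by
    rw [Finset.sum_add_distrib, Finset.sum_const, ← Finset.mul_sum]
    simp only [Finset.card_univ, Fintype.card_fin, nsmul_eq_mul]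
    field_simp
  rw [hexp]
  gcongr
end

section
/- In the Euclidean plane ℝ², let a and b be two points and R > 0. The set S = { x ∈ ℝ² : ∃ s ∈ [0,1], ‖x − (a + s·(b − a))‖ ≤ R }, consisting of all points within distance R of the line segment from a to b, has two-dimensional Lebesgue measure equal to 2·R·‖b − a‖ + π·R². -/
/-!
Affine isometries preserve Lebesgue measure, so we may move the segment to `[0, L] • e₀` with
`L = ‖b - a‖`. There the stadium is the disjoint union of the left half of the disk of radius `R`
about `0`, the rectangle `[0, L) × [-R, R]`, and the right half of the disk about `L • e₀`;
translating the last piece by `-L • e₀` reassembles the two halves into a full disk, of area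
`π R²`, while the rectangle has area `2 R L`.
-/

open MeasureTheory Set Metric

section Stadium

variable {E : Type*} [NormedAddCommGroup E] [NormedSpace ℝ E]

def stadium (a b : E) (R : ℝ) : Set E := {x | ∃ p ∈ segment ℝ a b, dist x p ≤ R}

theorem stadium_eq_setOf (a b : E) (R : ℝ) :
    stadium a b R = {x : E | ∃ s ∈ Icc (0 : ℝ) 1, ‖x - (a + s • (b - a))‖ ≤ R} := by
  simp [stadium, segment_eq_image', dist_eq_norm]

variable {F : Type*} [NormedAddCommGroup F] [NormedSpace ℝ F]

theorem AffineIsometryEquiv.preimage_stadium (g : E ≃ᵃⁱ[ℝ] F) (a b : E) (R : ℝ) :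
    g ⁻¹' stadium (g a) (g b) R = stadium a b R := by
  ext x
  have hseg := image_segment ℝ g.toAffineEquiv.toAffineMap a b
  simp only [AffineEquiv.coe_toAffineMap, AffineIsometryEquiv.coe_toAffineEquiv] at hseg
  simp [stadium, ← hseg]

theorem stadium_zero_smul (e : E) {L : ℝ} (hL : 0 ≤ L) (R : ℝ) :
    stadium 0 (L • e) R = {x | ∃ t ∈ Icc 0 L, dist x (t • e) ≤ R} := by
  have hseg := image_segment ℝ (LinearMap.toSpanSingleton ℝ E e).toAffineMap 0 L
  simp only [LinearMap.coe_toAffineMap, LinearMap.toSpanSingleton_apply, zero_smul,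
    segment_eq_Icc hL] at hseg
  simp [stadium, ← hseg]

theorem exists_mem_Icc_sq_add_sq_le_iff {L R u v : ℝ} (hL : 0 ≤ L) (hR : 0 ≤ R) :
    (∃ t ∈ Icc 0 L, (u - t) ^ 2 + v ^ 2 ≤ R ^ 2) ↔
      (u ^ 2 + v ^ 2 ≤ R ^ 2 ∧ u < 0) ∨ (u ∈ Ico 0 L ∧ v ∈ Icc (-R) R) ∨
        ((u - L) ^ 2 + v ^ 2 ≤ R ^ 2 ∧ L ≤ u) := by
  simp only [mem_Icc, mem_Ico]
  constructor
  · rintro ⟨t, ⟨ht0, htL⟩, h⟩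
    rcases lt_or_ge u 0 with hu0 | hu0
    · exact Or.inl ⟨by nlinarith, hu0⟩
    rcases lt_or_ge u L with huL | huL
    · exact Or.inr (Or.inl ⟨⟨hu0, huL⟩, abs_le_of_sq_le_sq' (by nlinarith) hR⟩)
    · exact Or.inr (Or.inr ⟨by nlinarith, huL⟩)
  · rintro (⟨h, -⟩ | ⟨⟨hu0, huL⟩, hvl, hvr⟩ | ⟨h, -⟩)
    · exact ⟨0, ⟨le_rfl, hL⟩, by simpa using h⟩
    · exact ⟨u, ⟨hu0, huL.le⟩, by nlinarith⟩
    · exact ⟨L, ⟨hL, le_rfl⟩, h⟩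

end Stadium

theorem AffineIsometryEquiv.measurePreserving {E F : Type*}
    [NormedAddCommGroup E] [InnerProductSpace ℝ E] [FiniteDimensional ℝ E]
    [MeasurableSpace E] [BorelSpace E]
    [NormedAddCommGroup F] [InnerProductSpace ℝ F] [FiniteDimensional ℝ F]
    [MeasurableSpace F] [BorelSpace F] (g : E ≃ᵃⁱ[ℝ] F) : MeasurePreserving g := by
  have hg : ⇑g = (· + g 0) ∘ g.linearIsometryEquiv := by
    ext x
    simpa using g.map_vadd 0 x
  rw [hg]
  exact (measurePreserving_add_right _ _).comp g.linearIsometryEquiv.measurePreserving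

theorem exists_affineIsometryEquiv_apply_eq_zero_apply_eq {F : Type*}
    [NormedAddCommGroup F] [InnerProductSpace ℝ F] {a b w : F} (h : ‖b - a‖ = ‖w‖) :
    ∃ g : F ≃ᵃⁱ[ℝ] F, g a = 0 ∧ g b = w :=
  ⟨(AffineIsometryEquiv.vaddConst ℝ a).symm.trans
      (Submodule.reflection (ℝ ∙ (b - a - w))ᗮ).toAffineIsometryEquiv,
    by simp, by simpa using Submodule.reflection_sub h⟩

namespace EuclideanSpace

theorem volume_setOf_forall_mem {ι : Type*} [Fintype ι] (s : ι → Set ℝ) :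
    volume {x : EuclideanSpace ℝ ι | ∀ i, x i ∈ s i} = ∏ i, volume (s i) := by
  rw [← volume_pi_pi, ← (volume_preserving_symm_measurableEquiv_toLp ι).measure_preimage_equiv]
  simp [Set.pi]

theorem dist_smul_single_zero_le_iff (x : EuclideanSpace ℝ (Fin 2)) (t : ℝ) {R : ℝ} (hR : 0 ≤ R) :
    dist x (t • single 0 1) ≤ R ↔ (x 0 - t) ^ 2 + x 1 ^ 2 ≤ R ^ 2 := by
  rw [EuclideanSpace.dist_eq, Real.sqrt_le_left hR]
  simp [Fin.sum_univ_two, Real.dist_eq, sq_abs]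

theorem volume_stadium_zero_smul_single {L R : ℝ} (hL : 0 ≤ L) (hR : 0 ≤ R) :
    volume (stadium (0 : EuclideanSpace ℝ (Fin 2)) (L • single 0 1) R) =
      ENNReal.ofReal (2 * R * L + Real.pi * R ^ 2) := by
  set D := closedBall (0 : EuclideanSpace ℝ (Fin 2)) R
  set H := {x : EuclideanSpace ℝ (Fin 2) | 0 ≤ x 0}
  set rect := {x : EuclideanSpace ℝ (Fin 2) | ∀ i, x i ∈ ![Ico 0 L, Icc (-R) R] i}
  set right := (· + -(L • single 0 1)) ⁻¹' (D ∩ H)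
  have hD : ∀ x, x ∈ D ↔ x 0 ^ 2 + x 1 ^ 2 ≤ R ^ 2 := fun x => by
    simpa [D] using dist_smul_single_zero_le_iff x 0 hR
  have hdecomp : stadium 0 (L • single 0 1) R = (D \ H) ∪ rect ∪ right := by
    ext x
    simp only [stadium_zero_smul _ hL, mem_ofPred_eq, dist_smul_single_zero_le_iff _ _ hR,
      exists_mem_Icc_sq_add_sq_le_iff hL hR]
    simp [rect, right, H, hD, Fin.forall_fin_two, ← sub_eq_add_neg, or_assoc]
  have hH : MeasurableSet H := measurableSet_le measurable_const (by fun_prop)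
  have hrect : MeasurableSet rect := by
    simp only [rect, Fin.forall_fin_two]
    exact (measurableSet_Ico.preimage (by fun_prop)).inter
      (measurableSet_Icc.preimage (by fun_prop))
  have hright : MeasurableSet right :=
    (measurableSet_closedBall.inter hH).preimage (measurable_add_const _)
  have hdisj_rect : Disjoint (D \ H) rect :=
    Set.disjoint_left.2 fun x hx hx' => hx.2 (hx' 0).1
  have hdisj_right : Disjoint (D \ H ∪ rect) right := by
    refine Set.disjoint_left.2 fun x hx hx' => ?_
    have hxL : x 0 < L := hx.elim (fun h => (not_le.1 h.2).trans_le hL) fun h => (h 0).2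
    have hLx : L ≤ x 0 := by simpa [H] using hx'.2
    exact hxL.not_ge hLx
  have hvol_rect : volume rect = ENNReal.ofReal (2 * R * L) := by
    rw [volume_setOf_forall_mem, Fin.prod_univ_two]
    simp only [Matrix.cons_val_zero, Matrix.cons_val_one, Matrix.cons_val_fin_one,
      Real.volume_Ico, Real.volume_Icc, sub_zero, sub_neg_eq_add, ← ENNReal.ofReal_mul hL]
    ring_nf
  calc _
      = volume rect + (volume (D \ H) + volume (D ∩ H)) := by
        rw [hdecomp, measure_union hdisj_right hright, measure_union hdisj_rect hrect,
          measure_preimage_add_right]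
        ring
    _ = ENNReal.ofReal (2 * R * L + Real.pi * R ^ 2) := by
        rw [measure_sdiff_add_inter D hH, hvol_rect, volume_closedBall_fin_two,
          ← ENNReal.ofReal_pow hR, ← ENNReal.ofReal_mul (by positivity),
          ← ENNReal.ofReal_add (by positivity) (by positivity), mul_comm (R ^ 2)]

end EuclideanSpace

/-- Lemma 1, geometric content: the set of points of `ℝ²` within
distance `R` of the segment from `a` to `b` (a stadium/obround) has Lebesgue
measure `2·R·‖b − a‖ + π·R²`. -/
theorem stadium_area (a b : EuclideanSpace ℝ (Fin 2)) (R : ℝ) (hR : 0 < R) :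
    volume {x : EuclideanSpace ℝ (Fin 2) |
        ∃ s ∈ Set.Icc (0 : ℝ) 1, ‖x - (a + s • (b - a))‖ ≤ R} =
      ENNReal.ofReal (2 * R * ‖b - a‖ + Real.pi * R ^ 2) := by
  obtain ⟨g, hga, hgb⟩ := exists_affineIsometryEquiv_apply_eq_zero_apply_eq (a := a) (b := b)
    (w := ‖b - a‖ • EuclideanSpace.single 0 1) (by simp [norm_smul])
  rw [← stadium_eq_setOf, ← g.preimage_stadium, hga, hgb,
    g.measurePreserving.measure_preimage_emb g.toHomeomorph.measurableEmbedding]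
  exact EuclideanSpace.volume_stadium_zero_smul_single (norm_nonneg _) hR.le
end
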